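/- Let I be a support-2 monomial ideal in K[x1,x2,x3,x4] whose underlying graph is the 4-cycle C_4 on x1,x2,x3,x4. If I has at least two minimal generators supported on some edge {x_i, x_j} of C_4, then the monomial x_i^{ν_{i,j}} x_j^{ν_{j,i}} lies in I^{(1)} but not in I; hence I has an embedded associated prime. -/

import Mathlib

set_option synthInstance.maxHeartbeats 1000000
set_option maxHeartbeats 1000000

open MvPolynomial

section Defs

variable {K : Type*} [Field K] {σ : Type*}

/-- `I` is a monomial ideal. -/
def IsMonomialIdeal (I : Ideal (MvPolynomial σ K)) : Prop :=
  ∃ A : Set (σ →₀ ℕ), I = Ideal.span ((fun a => (monomial a (1 : K) : MvPolynomial σ K)) '' A)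

/-- Exponent vectors of the minimal monomial generators of `I`. -/
def minGens (I : Ideal (MvPolynomial σ K)) : Set (σ →₀ ℕ) :=
  {a | (monomial a (1 : K) : MvPolynomial σ K) ∈ I ∧
    ∀ b : σ →₀ ℕ, (monomial b (1 : K) : MvPolynomial σ K) ∈ I → b ≤ a → b = a}

/-- A support-2 monomial ideal: every minimal monomial generator is supported
on exactly two variables. -/
def IsSupportTwo (I : Ideal (MvPolynomial σ K)) : Prop :=
  ∀ a ∈ minGens I, a.support.card = 2

variable [DecidableEq σ]

/-- Minimal monomial generators of `I` supported on `{i, j}`. -/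
def supportedOn (I : Ideal (MvPolynomial σ K)) (i j : σ) : Set (σ →₀ ℕ) :=
  {a | a ∈ minGens I ∧ a.support = {i, j}}

/-- `ν_{i,j}`: the minimum exponent of `x_i` among the minimal generators of `I`
supported on `{i, j}`. -/
noncomputable def nuExp (I : Ideal (MvPolynomial σ K)) (i j : σ) : ℕ :=
  sInf ((fun a => a i) '' supportedOn I i j)

/-- `μ_{i,j}`: the maximum exponent of `x_i` among the minimal generators of `I`
supported on `{i, j}`. -/
noncomputable def muExp (I : Ideal (MvPolynomial σ K)) (i j : σ) : ℕ :=
  sSup ((fun a => a i) '' supportedOn I i j)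

/-- The underlying simple graph `G(I)` of a support-2 monomial ideal. -/
def underGraph (I : Ideal (MvPolynomial σ K)) : SimpleGraph σ where
  Adj i j := i ≠ j ∧ (supportedOn I i j).Nonempty
  symm := ⟨by
    rintro i j ⟨hij, a, hmin, hs⟩
    exact ⟨hij.symm, a, hmin, by rw [hs, Finset.pair_comm]⟩⟩
  loopless := ⟨fun i h => h.1 rfl⟩

end Defs

section Symbolic

variable {R : Type*} [CommRing R]

/-- The component of `I` at a prime `P`, namely `I S_P ∩ S`. -/
noncomputable def localizedComponent (I P : Ideal R) (hP : P.IsPrime) : Ideal R :=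
  letI := hP
  (I.map (algebraMap R (Localization.AtPrime P))).comap
    (algebraMap R (Localization.AtPrime P))

/-- The `s`-th symbolic power `I^{(s)} = ⋂_{P ∈ MinAss(I)} (I^s S_P ∩ S)`. -/
noncomputable def symbolicPower (I : Ideal R) (s : ℕ) : Ideal R :=
  ⨅ P : I.minimalPrimes, localizedComponent (I ^ s) P.1 P.2.1.1

/-- A Simis ideal: `I^{(s)} = I^s` for all `s ≥ 1`. -/
def IsSimis (I : Ideal R) : Prop := ∀ s : ℕ, 1 ≤ s → symbolicPower I s = I ^ s

/-- `I` has no embedded associated primes. -/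
def NoEmbeddedPrimes (I : Ideal R) : Prop :=
  ∀ P ∈ associatedPrimes R (R ⧸ I), P ∈ I.minimalPrimes

end Symbolic

section Decomp

variable {K : Type*} [Field K] {σ : Type*}

/-- An irreducible monomial ideal: generated by pure powers of variables. -/
def IsIrredMonomialIdeal (Q : Ideal (MvPolynomial σ K)) : Prop :=
  ∃ (t : Finset σ) (e : σ → ℕ), (∀ i ∈ t, 1 ≤ e i) ∧
    Q = Ideal.span ((fun i => (X i : MvPolynomial σ K) ^ e i) '' t)

/-- `I` has a minimal (irredundant, distinct radicals) irreducible decomposition. -/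
def HasMinimalIrredDecomp (I : Ideal (MvPolynomial σ K)) : Prop :=
  ∃ (r : ℕ) (Q : Fin r → Ideal (MvPolynomial σ K)),
    (∀ k, IsIrredMonomialIdeal (Q k)) ∧ I = ⨅ k, Q k ∧
    (∀ k, (⨅ l ∈ ({k}ᶜ : Set (Fin r)), Q l) ≠ I) ∧
    (∀ k l, k ≠ l → (Q k).radical ≠ (Q l).radical)

/-- The ideal obtained from `J` by the standard linear weighting `x_i ↦ x_i^{d_i}`. -/
noncomputable def weightedIdeal (d : σ → ℕ) (J : Ideal (MvPolynomial σ K)) : Ideal (MvPolynomial σ K) :=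
  Ideal.span {m | ∃ a ∈ minGens J, ∃ b : σ →₀ ℕ,
    (∀ i, b i = d i * a i) ∧ m = (monomial b (1 : K) : MvPolynomial σ K)}

/-- `I` has a standard linear weighting: there are `d_i ≥ 1` such that every
minimal generator supported on `{i,j}` is `x_i^{d_i} x_j^{d_j}`. -/
def HasStdWeighting (I : Ideal (MvPolynomial σ K)) : Prop :=
  ∃ d : σ → ℕ, (∀ i, 1 ≤ d i) ∧ ∀ a ∈ minGens I, ∀ i ∈ a.support, a i = d i

variable (K) in
/-- The edge ideal of a simple graph. -/
noncomputable def edgeIdeal (G : SimpleGraph σ) : Ideal (MvPolynomial σ K) :=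
  Ideal.span {m | ∃ i j, G.Adj i j ∧ m = (X i * X j : MvPolynomial σ K)}

end Decomp

section Graph

variable {σ : Type*}

/-- A vertex cover of a simple graph. -/
def IsVertexCover (G : SimpleGraph σ) (C : Set σ) : Prop :=
  ∀ ⦃i j⦄, G.Adj i j → i ∈ C ∨ j ∈ C

/-- A minimal vertex cover of a simple graph. -/
def IsMinimalVertexCover (G : SimpleGraph σ) (C : Set σ) : Prop :=
  IsVertexCover G C ∧ ∀ D ⊆ C, IsVertexCover G D → D = C

end Graph

section CM

variable {K : Type*} [Field K] {σ : Type*}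

/-- The depth of `S/I` with respect to the irrelevant maximal ideal
`⟨x_1, …, x_n⟩`: the supremum of lengths of regular sequences on `S/I`
consisting of elements of that ideal. -/
noncomputable def quotDepth (I : Ideal (MvPolynomial σ K)) : ℕ∞ :=
  sSup {n : ℕ∞ | ∃ rs : List (MvPolynomial σ K), (rs.length : ℕ∞) = n ∧
    (∀ r ∈ rs, r ∈ Ideal.span (Set.range (X : σ → MvPolynomial σ K))) ∧
    RingTheory.Sequence.IsRegular (MvPolynomial σ K ⧸ I)
      (rs.map (Ideal.Quotient.mk I))}

/-- `S/I` is Cohen–Macaulay: depth equals Krull dimension. -/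
def IsCohenMacaulayQuot (I : Ideal (MvPolynomial σ K)) : Prop :=
  (quotDepth I : WithBot ℕ∞) = ringKrullDim (MvPolynomial σ K ⧸ I)

/-- The height of a prime ideal, as the Krull dimension of the localization. -/
noncomputable def primeHeight' {R : Type*} [CommRing R] (P : Ideal R) (hP : P.IsPrime) :
    WithBot ℕ∞ :=
  letI := hP
  ringKrullDim (Localization.AtPrime P)

/-- `I` is unmixed: all associated primes of `S/I` have the same height. -/
def IsUnmixed {R : Type*} [CommRing R] (I : Ideal R) : Prop :=
  ∀ P, ∀ hP : P ∈ associatedPrimes R (R ⧸ I), ∀ Q, ∀ hQ : Q ∈ associatedPrimes R (R ⧸ I),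
    primeHeight' P hP.1 = primeHeight' Q hQ.1

end CM

/-! If `m = x_i^{ν_{i,j}} x_j^{ν_{j,i}}` lay in `I`, it would lie below two distinct minimal
generators supported on `{x_i, x_j}` and equal both, so `m ∉ I`.

The variables lying in a prime `P ⊇ I` form a vertex cover of `C_4`, which contains one of the
independent covers `{x_1, x_3}`, `{x_2, x_4}`; that cover spans a prime containing `I`, so a
minimal `P` is generated by it and misses `x_i` or `x_j`, say `x_j`. A generator
on `{x_i, x_j}` with `x_i`-exponent `ν_{i,j}` is `m x_j^e`, hence `m ∈ I S_P`. So
`m ∈ I^{(1)} \ I`, and no associated prime containing `ann(m + I)` can be minimal. -/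

theorem Finsupp.eq_single_add_single_of_support_eq {σ M : Type*} [AddCommMonoid M]
    [DecidableEq σ] {c : σ →₀ M} {i j : σ} (hij : i ≠ j) (hc : c.support = {i, j}) :
    c = Finsupp.single i (c i) + Finsupp.single j (c j) := by
  conv_lhs => rw [← Finsupp.sum_single c]
  rw [Finsupp.sum, hc, Finset.sum_pair hij]

namespace MvPolynomial

variable {σ R : Type*} [CommRing R]

theorem sub_aeval_mem_span_X_image (s : Set σ) [DecidablePred (· ∈ s)] (p : MvPolynomial σ R) :
    p - aeval (fun i => if i ∈ s then 0 else X i) p ∈ Ideal.span (X '' s) := by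
  induction p using MvPolynomial.induction_on with
  | C a => simp
  | add p q hp hq =>
    rw [map_add, add_sub_add_comm]
    exact add_mem hp hq
  | mul_X p i hp =>
    have hXi : X i - (if i ∈ s then 0 else X i) ∈
        Ideal.span (X '' s : Set (MvPolynomial σ R)) := by
      split_ifs with hi
      · rw [sub_zero]
        exact Ideal.subset_span ⟨i, hi, rfl⟩
      · simp
    rw [map_mul, aeval_X, ← sub_add_sub_cancel _ (aeval _ p * X i), ← sub_mul, ← mul_sub]
    exact add_mem (Ideal.mul_mem_right _ _ hp) (Ideal.mul_mem_left _ _ hXi)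

theorem isPrime_span_X_image [IsDomain R] (s : Set σ) :
    (Ideal.span (X '' s : Set (MvPolynomial σ R))).IsPrime := by
  classical
  let φ : MvPolynomial σ R →ₐ[R] MvPolynomial σ R :=
    aeval fun i => if i ∈ s then 0 else X i
  suffices Ideal.span (X '' s) = RingHom.ker φ from this ▸ RingHom.ker_isPrime _
  refine le_antisymm ?_ fun p hp => ?_
  · rw [Ideal.span_le]
    rintro _ ⟨i, hi, rfl⟩
    simp [φ, hi]
  · have hφp : aeval (fun i => if i ∈ s then 0 else X i) p = 0 := RingHom.mem_ker.mp hp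
    simpa only [hφp, sub_zero] using sub_aeval_mem_span_X_image s p

theorem X_mem_span_X_image_iff [Nontrivial R] {s : Set σ} {v : σ} :
    (X v : MvPolynomial σ R) ∈ Ideal.span (X '' s) ↔ v ∈ s := by
  classical
  simp [mem_ideal_span_X_image, support_X, Finsupp.single_apply]

end MvPolynomial

section LocalizedComponent

variable {R : Type*} [CommRing R] {I P : Ideal R}

theorem mem_localizedComponent_iff (hP : P.IsPrime) {x : R} :
    x ∈ localizedComponent I P hP ↔ ∃ s ∉ P, s * x ∈ I :=
  IsLocalization.algebraMap_mem_map_algebraMap_iff P.primeCompl _ I x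

theorem exists_embedded_associatedPrime_of_mem_symbolicPower_one [IsNoetherianRing R] {x : R}
    (hx : x ∈ symbolicPower I 1) (hxI : x ∉ I) :
    ∃ P ∈ associatedPrimes R (R ⧸ I), P ∉ I.minimalPrimes := by
  have hx0 : Ideal.Quotient.mk I x ≠ 0 := by rwa [Ne, Ideal.Quotient.eq_zero_iff_mem]
  obtain ⟨P, hPass, hann⟩ := exists_le_isAssociatedPrime_of_isNoetherianRing R _ hx0
  refine ⟨P, hPass, fun hPmin => ?_⟩
  have hxP := Ideal.mem_iInf.mp hx ⟨P, hPmin⟩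
  rw [pow_one, mem_localizedComponent_iff] at hxP
  obtain ⟨s, hsP, hsx⟩ := hxP
  refine hsP (hann (Submodule.mem_colon_singleton.mpr ?_))
  change Ideal.Quotient.mk I (s * x) ∈ (⊥ : Submodule R (R ⧸ I))
  rwa [Submodule.mem_bot, Ideal.Quotient.eq_zero_iff_mem]

end LocalizedComponent

section MonomialIdeal

variable {K : Type*} [Field K] {σ : Type*} {I : Ideal (MvPolynomial σ K)}

theorem exists_mem_minGens_le {b : σ →₀ ℕ} (hb : monomial b (1 : K) ∈ I) :
    ∃ c ∈ minGens I, c ≤ b := by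
  obtain ⟨c, ⟨hcI, hcb⟩, hmin⟩ := wellFounded_lt.has_min
    {c | monomial c (1 : K) ∈ I ∧ c ≤ b} ⟨b, hb, le_rfl⟩
  refine ⟨c, ⟨hcI, fun d hdI hdc => ?_⟩, hcb⟩
  by_contra hdc'
  exact hmin d ⟨hdI, hdc.trans hcb⟩ (lt_of_le_of_ne hdc hdc')

variable [DecidableEq σ] {i j : σ} {c : σ →₀ ℕ}

theorem supportedOn_comm (I : Ideal (MvPolynomial σ K)) (i j : σ) :
    supportedOn I i j = supportedOn I j i := by
  simp only [supportedOn, Finset.pair_comm]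

theorem nuExp_le_apply (hc : c ∈ supportedOn I i j) : nuExp I i j ≤ c i :=
  Nat.sInf_le ⟨c, hc, rfl⟩

noncomputable def nuCorner (I : Ideal (MvPolynomial σ K)) (i j : σ) : σ →₀ ℕ :=
  Finsupp.single i (nuExp I i j) + Finsupp.single j (nuExp I j i)

theorem nuCorner_comm (I : Ideal (MvPolynomial σ K)) (i j : σ) :
    nuCorner I i j = nuCorner I j i :=
  add_comm _ _

theorem nuCorner_le (hij : i ≠ j) (hc : c ∈ supportedOn I i j) : nuCorner I i j ≤ c := by
  rw [Finsupp.eq_single_add_single_of_support_eq hij hc.2]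
  exact add_le_add (Finsupp.single_le_single.mpr (nuExp_le_apply hc))
    (Finsupp.single_le_single.mpr (nuExp_le_apply (supportedOn_comm I i j ▸ hc)))

theorem monomial_nuCorner_notMem {a b : σ →₀ ℕ} (hij : i ≠ j)
    (ha : a ∈ supportedOn I i j) (hb : b ∈ supportedOn I i j) (hab : a ≠ b) :
    monomial (nuCorner I i j) (1 : K) ∉ I :=
  fun h => hab ((ha.1.2 _ h (nuCorner_le hij ha)).symm.trans (hb.1.2 _ h (nuCorner_le hij hb)))

theorem exists_mem_supportedOn_eq_nuCorner_add (hij : i ≠ j)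
    (hI : (supportedOn I i j).Nonempty) :
    ∃ c ∈ supportedOn I i j, ∃ e, c = nuCorner I i j + Finsupp.single j e := by
  obtain ⟨c, hc, hci⟩ : nuExp I i j ∈ (fun a => a i) '' supportedOn I i j :=
    Nat.sInf_mem (hI.image _)
  refine ⟨c, hc, c j - nuExp I j i, ?_⟩
  rw [nuCorner, add_assoc, ← Finsupp.single_add,
    Nat.add_sub_cancel' (nuExp_le_apply (supportedOn_comm I i j ▸ hc)), ← hci]
  exact Finsupp.eq_single_add_single_of_support_eq hij hc.2

theorem monomial_nuCorner_mem_localizedComponent (hij : i ≠ j)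
    (hI : (supportedOn I i j).Nonempty) {P : Ideal (MvPolynomial σ K)} (hP : P.IsPrime)
    (hXj : X j ∉ P) : monomial (nuCorner I i j) (1 : K) ∈ localizedComponent I P hP := by
  obtain ⟨c, hc, e, rfl⟩ := exists_mem_supportedOn_eq_nuCorner_add hij hI
  refine (mem_localizedComponent_iff hP).mpr ⟨X j ^ e, fun h => hXj (hP.mem_of_pow_mem e h), ?_⟩
  rw [X_pow_eq_monomial, monomial_mul, one_mul, add_comm]
  exact hc.1.1

end MonomialIdeal

section VertexCover

variable {K : Type*} [Field K] {σ : Type*} [DecidableEq σ] {I P : Ideal (MvPolynomial σ K)}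

theorem isVertexCover_setOf_X_mem (hP : P.IsPrime) (hIP : I ≤ P) :
    IsVertexCover (underGraph I) {v | X v ∈ P} := by
  rintro k l ⟨hkl, c, hc, hsupp⟩
  have hcP : X k ^ c k * X l ^ c l ∈ P := by
    rw [X_pow_eq_monomial, X_pow_eq_monomial, monomial_mul, one_mul,
      ← Finsupp.eq_single_add_single_of_support_eq hkl hsupp]
    exact hIP hc.1
  exact (hP.mem_or_mem hcP).imp (hP.mem_of_pow_mem _) (hP.mem_of_pow_mem _)

theorem le_span_X_image_of_isVertexCover (hmon : IsMonomialIdeal I) (h2 : IsSupportTwo I)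
    {C : Set σ} (hC : IsVertexCover (underGraph I) C) : I ≤ Ideal.span (X '' C) := by
  obtain ⟨A, rfl⟩ := hmon
  rw [Ideal.span_le]
  rintro _ ⟨a, ha, rfl⟩
  have haI : monomial a (1 : K) ∈ Ideal.span ((fun a => monomial a (1 : K)) '' A) :=
    Ideal.subset_span ⟨a, ha, rfl⟩
  obtain ⟨c, hc, hca⟩ := exists_mem_minGens_le haI
  obtain ⟨k, l, hkl, hsupp⟩ := Finset.card_eq_two.mp (h2 c hc)
  have hv : ∃ v ∈ C, c v ≠ 0 := by
    rcases hC ⟨hkl, c, hc, hsupp⟩ with h | h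
    · exact ⟨k, h, Finsupp.mem_support_iff.mp (by simp [hsupp])⟩
    · exact ⟨l, h, Finsupp.mem_support_iff.mp (by simp [hsupp])⟩
  obtain ⟨v, hvC, hcv⟩ := hv
  rw [SetLike.mem_coe, mem_ideal_span_X_image]
  intro m hm
  rw [Finset.mem_singleton.mp (support_monomial_subset hm)]
  exact ⟨v, hvC, ((Nat.pos_of_ne_zero hcv).trans_le (hca v)).ne'⟩

/-- A minimal prime containing the variables of a vertex cover is generated by them. -/
theorem mem_of_X_mem_of_mem_minimalPrimes (hmon : IsMonomialIdeal I) (h2 : IsSupportTwo I)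
    (hP : P ∈ I.minimalPrimes) {C : Set σ} (hC : IsVertexCover (underGraph I) C)
    (hCP : ∀ v ∈ C, X v ∈ P) {v : σ} (hv : X v ∈ P) : v ∈ C := by
  have hPC : P ≤ Ideal.span (X '' C) :=
    hP.2 ⟨isPrime_span_X_image C, le_span_X_image_of_isVertexCover hmon h2 hC⟩
      (Ideal.span_le.mpr (by rintro _ ⟨u, hu, rfl⟩; exact hCP u hu))
  exact X_mem_span_X_image_iff.mp (hPC hv)

end VertexCover

theorem exists_independent_isVertexCover_subset_of_cycle {G : SimpleGraph (Fin 4)}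
    (hG : ∀ i j : Fin 4, G.Adj i j ↔ (i ≠ j ∧ (j = i + 1 ∨ i = j + 1)))
    {C : Set (Fin 4)} (hC : IsVertexCover G C) :
    ∃ D ⊆ C, IsVertexCover G D ∧ ∀ i j, G.Adj i j → i ∉ D ∨ j ∉ D := by
  simp only [IsVertexCover, hG] at hC ⊢
  by_cases h02 : 0 ∈ C ∧ 2 ∈ C
  · refine ⟨{0, 2}, ?_, by decide, by decide⟩
    simp [Set.insert_subset_iff, h02]
  · have h13 : 1 ∈ C ∧ 3 ∈ C := by
      rcases not_and_or.mp h02 with h0 | h2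
      · exact ⟨(hC (i := 0) (j := 1) (by decide)).resolve_left h0,
          (hC (i := 3) (j := 0) (by decide)).resolve_right h0⟩
      · exact ⟨(hC (i := 1) (j := 2) (by decide)).resolve_right h2,
          (hC (i := 2) (j := 3) (by decide)).resolve_left h2⟩
    refine ⟨{1, 3}, ?_, by decide, by decide⟩
    simp [Set.insert_subset_iff, h13]

theorem X_notMem_or_of_mem_minimalPrimes {K : Type*} [Field K]
    {I P : Ideal (MvPolynomial (Fin 4) K)} (hmon : IsMonomialIdeal I) (h2 : IsSupportTwo I)
    (hcyc : ∀ i j : Fin 4, (underGraph I).Adj i j ↔ (i ≠ j ∧ (j = i + 1 ∨ i = j + 1)))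
    (hP : P ∈ I.minimalPrimes) {i j : Fin 4} (hij : (underGraph I).Adj i j) :
    X i ∉ P ∨ X j ∉ P := by
  by_contra! h
  obtain ⟨D, hDC, hD, hDind⟩ := exists_independent_isVertexCover_subset_of_cycle hcyc
    (isVertexCover_setOf_X_mem hP.1.1 hP.1.2)
  have mem {v : Fin 4} (hv : X v ∈ P) : v ∈ D :=
    mem_of_X_mem_of_mem_minimalPrimes hmon h2 hP hD (fun u hu => hDC hu) hv
  exact (hDind i j hij).elim (· (mem h.1)) (· (mem h.2))

theorem stmt14 {K : Type*} [Field K] (I : Ideal (MvPolynomial (Fin 4) K))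
    (hmon : IsMonomialIdeal I) (h2 : IsSupportTwo I)
    (hcyc : ∀ i j : Fin 4, (underGraph I).Adj i j ↔
      (i ≠ j ∧ (j = i + 1 ∨ i = j + 1)))
    (i j : Fin 4) (hij : (underGraph I).Adj i j)
    (a b : Fin 4 →₀ ℕ) (ha : a ∈ supportedOn I i j)
    (hb : b ∈ supportedOn I i j) (hab : a ≠ b) :
    (monomial (Finsupp.single i (nuExp I i j) + Finsupp.single j (nuExp I j i))
        (1 : K) : MvPolynomial (Fin 4) K) ∈ symbolicPower I 1 ∧
    (monomial (Finsupp.single i (nuExp I i j) + Finsupp.single j (nuExp I j i))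
        (1 : K) : MvPolynomial (Fin 4) K) ∉ I ∧
    ∃ P ∈ associatedPrimes (MvPolynomial (Fin 4) K) (MvPolynomial (Fin 4) K ⧸ I),
      P ∉ I.minimalPrimes := by
  change monomial (nuCorner I i j) (1 : K) ∈ _ ∧ monomial (nuCorner I i j) (1 : K) ∉ I ∧ _
  have hnotMem := monomial_nuCorner_notMem hij.1 ha hb hab
  have hsymb : monomial (nuCorner I i j) (1 : K) ∈ symbolicPower I 1 := by
    refine Ideal.mem_iInf.mpr fun ⟨P, hP⟩ => ?_
    rw [pow_one]
    rcases X_notMem_or_of_mem_minimalPrimes hmon h2 hcyc hP hij with hXi | hXj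
    · rw [nuCorner_comm]
      exact monomial_nuCorner_mem_localizedComponent hij.1.symm hij.symm.2 hP.1.1 hXi
    · exact monomial_nuCorner_mem_localizedComponent hij.1 hij.2 hP.1.1 hXj
  exact ⟨hsymb, hnotMem, exists_embedded_associatedPrime_of_mem_symbolicPower_one hsymb hnotMem⟩
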